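/- Suppose n is even. Let M be a matching of maximum weight among all matchings of size n/3 in G, and let N be a matching of maximum weight among all matchings of size n/2 in G. Then w(N) ≥ w(M) − w(M_1) + w(X_1) + w(Y_2) + w(X_6). -/
import Mathlib


open Finset
open scoped Classical

set_option linter.unusedSectionVars false
set_option linter.unusedVariables false

namespace MW3PP

/-- A 3-path `xyz`: a path on three distinct vertices with middle vertex `y`. -/
structure P3 (V : Type*) where
  x : V
  y : V
  z : V
  hxy : x ≠ y
  hyz : y ≠ z
  hxz : x ≠ z

variable {V : Type*} [Fintype V] [DecidableEq V]

/-- The vertex set of a 3-path. -/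
def P3.verts (p : P3 V) : Finset V := {p.x, p.y, p.z}

/-- The two edges of a 3-path. -/
def P3.edges (p : P3 V) : Finset (Sym2 V) := {s(p.x, p.y), s(p.y, p.z)}

/-- The weight of a 3-path. -/
def P3.wt (w : Sym2 V → ℝ) (p : P3 V) : ℝ := w s(p.x, p.y) + w s(p.y, p.z)

/-- The total weight of a set of edges. -/
def ew (w : Sym2 V → ℝ) (F : Finset (Sym2 V)) : ℝ := ∑ e ∈ F, w e

/-- The total weight of a set of 3-paths. -/
def pw (w : Sym2 V → ℝ) (P : Finset (P3 V)) : ℝ := ∑ p ∈ P, p.wt w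

/-- `∑_{xyz ∈ S} max (w (xy)) (w (yz))`. -/
def maxSum (w : Sym2 V → ℝ) (S : Finset (P3 V)) : ℝ :=
  ∑ p ∈ S, max (w s(p.x, p.y)) (w s(p.y, p.z))

/-- A perfect 3-path packing: `n/3` pairwise vertex-disjoint 3-paths covering all vertices. -/
def IsPacking (P : Finset (P3 V)) : Prop :=
  P.card = Fintype.card V / 3 ∧
  (∀ p ∈ P, ∀ q ∈ P, p ≠ q → Disjoint p.verts q.verts) ∧
  (∀ v : V, ∃ p ∈ P, v ∈ p.verts)

/-- A maximum-weight perfect 3-path packing. -/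
def IsMaxPacking (w : Sym2 V → ℝ) (P : Finset (P3 V)) : Prop :=
  IsPacking P ∧ ∀ Q : Finset (P3 V), IsPacking Q → pw w Q ≤ pw w P

/-- A matching: a set of pairwise vertex-disjoint (non-loop) edges. -/
def IsMatching (M : Finset (Sym2 V)) : Prop :=
  (∀ e ∈ M, ¬ e.IsDiag) ∧
  ∀ e ∈ M, ∀ f ∈ M, e ≠ f → ∀ v : V, v ∈ e → v ∉ f

/-- A maximum-weight matching among all matchings of size `k`. -/
def IsMaxMatchingOfSize (w : Sym2 V → ℝ) (k : ℕ) (M : Finset (Sym2 V)) : Prop :=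
  IsMatching M ∧ M.card = k ∧
  ∀ M' : Finset (Sym2 V), IsMatching M' → M'.card = k → ew w M' ≤ ew w M

/-- `v ∈ V(M)` : vertex `v` is covered by the matching `M`. -/
def covered (M : Finset (Sym2 V)) (v : V) : Prop := ∃ e ∈ M, v ∈ e

/-- `e_u` : the edge of `M` containing `u` (junk value if there is none). -/
noncomputable def eMatch (M : Finset (Sym2 V)) (u : V) : Sym2 V :=
  if h : ∃ e ∈ M, u ∈ e then h.choose else s(u, u)

/-- The cost `c` of an edge with respect to a matching `M`:
`c(uv) = w(uv) - min (w (e_u)) (w (e_v))` if both endpoints are covered by `M`,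
and `c(uv) = w(uv)` otherwise. -/
noncomputable def cost (w : Sym2 V → ℝ) (M : Finset (Sym2 V)) : Sym2 V → ℝ :=
  Sym2.lift ⟨fun u v =>
    if covered M u ∧ covered M v then
      w s(u, v) - min (w (eMatch M u)) (w (eMatch M v))
    else w s(u, v), by
      intro u v
      dsimp only
      by_cases h : covered M u ∧ covered M v
      · rw [if_pos h, if_pos (show covered M v ∧ covered M u from ⟨h.2, h.1⟩),
          Sym2.eq_swap, min_comm]
      · rw [if_neg h, if_neg (show ¬(covered M v ∧ covered M u) from fun h' => h ⟨h'.2, h'.1⟩),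
          Sym2.eq_swap]⟩

/-- The total cost of a set of edges. -/
noncomputable def cw (w : Sym2 V → ℝ) (M F : Finset (Sym2 V)) : ℝ := ∑ e ∈ F, cost w M e

/-- The number of vertices of the 3-path `p` covered by `M`. -/
noncomputable def kcnt (M : Finset (Sym2 V)) (p : P3 V) : ℕ :=
  (p.verts.filter fun v => covered M v).card

/-- Exactly one of the two edges of `p` lies in `M`. -/
def exOne (M : Finset (Sym2 V)) (p : P3 V) : Prop :=
  (s(p.x, p.y) ∈ M ∧ s(p.y, p.z) ∉ M) ∨ (s(p.x, p.y) ∉ M ∧ s(p.y, p.z) ∈ M)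

def cls1 (M : Finset (Sym2 V)) (p : P3 V) : Prop := kcnt M p = 0
def cls2 (M : Finset (Sym2 V)) (p : P3 V) : Prop := kcnt M p = 1 ∧ ¬ covered M p.y
def cls3 (M : Finset (Sym2 V)) (p : P3 V) : Prop := kcnt M p = 1 ∧ covered M p.y
def cls4 (M : Finset (Sym2 V)) (p : P3 V) : Prop := kcnt M p = 2 ∧ ¬ covered M p.y
def cls5 (M : Finset (Sym2 V)) (p : P3 V) : Prop := kcnt M p = 2 ∧ covered M p.y ∧ exOne M p
def cls6 (M : Finset (Sym2 V)) (p : P3 V) : Prop :=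
  kcnt M p = 2 ∧ covered M p.y ∧ s(p.x, p.y) ∉ M ∧ s(p.y, p.z) ∉ M
def cls7 (M : Finset (Sym2 V)) (p : P3 V) : Prop := kcnt M p = 3 ∧ exOne M p
def cls8 (M : Finset (Sym2 V)) (p : P3 V) : Prop :=
  kcnt M p = 3 ∧ s(p.x, p.y) ∉ M ∧ s(p.y, p.z) ∉ M

/-- The subset of a set of 3-paths satisfying a predicate. -/
noncomputable def psel (P : Finset (P3 V)) (c : P3 V → Prop) : Finset (P3 V) := P.filter c

/-- The set of all edges of the 3-paths in `S`. -/
def Esub (S : Finset (P3 V)) : Finset (Sym2 V) := S.biUnion P3.edges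

/-- The heaviest edge of a 3-path (the edge `xy` in case of a tie). -/
noncomputable def heavy (w : Sym2 V → ℝ) (p : P3 V) : Sym2 V :=
  if w s(p.y, p.z) ≤ w s(p.x, p.y) then s(p.x, p.y) else s(p.y, p.z)

noncomputable def X1 (w : Sym2 V → ℝ) (P : Finset (P3 V)) (M : Finset (Sym2 V)) :
    Finset (Sym2 V) := (psel P (cls1 M)).image (heavy w)
noncomputable def X2 (P : Finset (P3 V)) (M : Finset (Sym2 V)) : Finset (Sym2 V) :=
  (psel P (cls2 M)).image fun p => if covered M p.x then s(p.x, p.y) else s(p.y, p.z)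
noncomputable def X3 (w : Sym2 V → ℝ) (P : Finset (P3 V)) (M : Finset (Sym2 V)) :
    Finset (Sym2 V) := (psel P (cls3 M)).image (heavy w)
noncomputable def X4 (w : Sym2 V → ℝ) (P : Finset (P3 V)) (M : Finset (Sym2 V)) :
    Finset (Sym2 V) := (psel P (cls4 M)).image (heavy w)
noncomputable def X5 (P : Finset (P3 V)) (M : Finset (Sym2 V)) : Finset (Sym2 V) :=
  (psel P (cls5 M)).image fun p => if s(p.x, p.y) ∈ M then s(p.y, p.z) else s(p.x, p.y)
noncomputable def X6 (P : Finset (P3 V)) (M : Finset (Sym2 V)) : Finset (Sym2 V) :=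
  (psel P (cls6 M)).image fun p => if covered M p.x then s(p.y, p.z) else s(p.x, p.y)
noncomputable def X7 (P : Finset (P3 V)) (M : Finset (Sym2 V)) : Finset (Sym2 V) :=
  (psel P (cls7 M)).image fun p => if s(p.x, p.y) ∈ M then s(p.y, p.z) else s(p.x, p.y)
noncomputable def X8 (w : Sym2 V → ℝ) (P : Finset (P3 V)) (M : Finset (Sym2 V)) :
    Finset (Sym2 V) := (psel P (cls8 M)).image (heavy w)

noncomputable def Y1 (w : Sym2 V → ℝ) (P : Finset (P3 V)) (M : Finset (Sym2 V)) :
    Finset (Sym2 V) := Esub (psel P (cls1 M)) \ X1 w P M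
noncomputable def Y2 (P : Finset (P3 V)) (M : Finset (Sym2 V)) : Finset (Sym2 V) :=
  Esub (psel P (cls2 M)) \ X2 P M
noncomputable def Y3 (w : Sym2 V → ℝ) (P : Finset (P3 V)) (M : Finset (Sym2 V)) :
    Finset (Sym2 V) := Esub (psel P (cls3 M)) \ X3 w P M
noncomputable def Y4 (w : Sym2 V → ℝ) (P : Finset (P3 V)) (M : Finset (Sym2 V)) :
    Finset (Sym2 V) := Esub (psel P (cls4 M)) \ X4 w P M
noncomputable def Y5 (P : Finset (P3 V)) (M : Finset (Sym2 V)) : Finset (Sym2 V) :=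
  Esub (psel P (cls5 M)) \ X5 P M
noncomputable def Y6 (P : Finset (P3 V)) (M : Finset (Sym2 V)) : Finset (Sym2 V) :=
  Esub (psel P (cls6 M)) \ X6 P M
noncomputable def Y7 (P : Finset (P3 V)) (M : Finset (Sym2 V)) : Finset (Sym2 V) :=
  Esub (psel P (cls7 M)) \ X7 P M
noncomputable def Y8 (w : Sym2 V → ℝ) (P : Finset (P3 V)) (M : Finset (Sym2 V)) :
    Finset (Sym2 V) := Esub (psel P (cls8 M)) \ X8 w P M

/-- An edge is a middle edge (w.r.t. `M`) if exactly one of its endpoints lies in `V(M)`. -/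
def isMiddle (M : Finset (Sym2 V)) (e : Sym2 V) : Prop :=
  ∃ u v : V, e = s(u, v) ∧ covered M u ∧ ¬ covered M v

/-- Two edges share a vertex. -/
def shares (e f : Sym2 V) : Prop := ∃ v, v ∈ e ∧ v ∈ f

/-- `g` is a middle edge of some 3-path in `S`. -/
def middleIn (M : Finset (Sym2 V)) (S : Finset (P3 V)) (g : Sym2 V) : Prop :=
  (∃ p ∈ S, g ∈ p.edges) ∧ isMiddle M g

/-- The 3-paths of `P` lying in classes 2, 3 or 4. -/
noncomputable def P234 (P : Finset (P3 V)) (M : Finset (Sym2 V)) : Finset (P3 V) :=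
  psel P fun p => cls2 M p ∨ cls3 M p ∨ cls4 M p

/-- `M_1`: edges of `M` sharing a vertex with at least one middle edge of a 3-path of `P*_6`. -/
noncomputable def Mset1 (P : Finset (P3 V)) (M : Finset (Sym2 V)) : Finset (Sym2 V) :=
  M.filter fun f => ∃ g, middleIn M (psel P (cls6 M)) g ∧ shares f g

/-- `M_2`: edges of `M` sharing a vertex with at least one middle edge, all middle edges met
belonging to 3-paths of `P*_2 ∪ P*_3 ∪ P*_4`. -/
noncomputable def Mset2 (P : Finset (P3 V)) (M : Finset (Sym2 V)) : Finset (Sym2 V) :=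
  M.filter fun f =>
    (∃ g, middleIn M P g ∧ shares f g) ∧
    ∀ g, middleIn M P g → shares f g → middleIn M (P234 P M) g

/-- `M_3 = M ∩ E(P*_7)`. -/
noncomputable def Mset3 (P : Finset (P3 V)) (M : Finset (Sym2 V)) : Finset (Sym2 V) :=
  M ∩ Esub (psel P (cls7 M))

/-- `M_4 = M ∩ E(P*_5)`. -/
noncomputable def Mset4 (P : Finset (P3 V)) (M : Finset (Sym2 V)) : Finset (Sym2 V) :=
  M ∩ Esub (psel P (cls5 M))

/-- The middle edges of 3-paths of `P*_6`. -/
noncomputable def mid6 (P : Finset (P3 V)) (M : Finset (Sym2 V)) : Finset (Sym2 V) :=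
  (Esub (psel P (cls6 M))).filter (isMiddle M)

/-- `M'_1`: edges of `M_1` meeting exactly one middle edge of a 3-path of `P*_6` and
no middle edge of a 3-path of `P*_2 ∪ P*_3 ∪ P*_4`. -/
noncomputable def Mset1' (P : Finset (P3 V)) (M : Finset (Sym2 V)) : Finset (Sym2 V) :=
  (Mset1 P M).filter fun f =>
    ((mid6 P M).filter fun g => shares f g).card = 1 ∧
    ∀ g, middleIn M (P234 P M) g → ¬ shares f g

/-- `M''_1`: edges of `M_1` meeting two middle edges of 3-paths of `P*_6`. -/
noncomputable def Mset1'' (P : Finset (P3 V)) (M : Finset (Sym2 V)) : Finset (Sym2 V) :=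
  (Mset1 P M).filter fun f => ((mid6 P M).filter fun g => shares f g).card = 2

/-- `M'''_1`: edges of `M_1` meeting exactly one middle edge of a 3-path of `P*_6` and
at least one middle edge of a 3-path of `P*_2 ∪ P*_3 ∪ P*_4`. -/
noncomputable def Mset1''' (P : Finset (P3 V)) (M : Finset (Sym2 V)) : Finset (Sym2 V) :=
  (Mset1 P M).filter fun f =>
    ((mid6 P M).filter fun g => shares f g).card = 1 ∧
    ∃ g, middleIn M (P234 P M) g ∧ shares f g

/-- Assumption on `P*`: for every 3-path `xyz ∈ P*` with `y ∉ V(M)` and `x, z ∈ V(M)`,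
the vertices `x` and `z` lie in two distinct edges of `M`. -/
def Ass (P : Finset (P3 V)) (M : Finset (Sym2 V)) : Prop :=
  ∀ p ∈ P, ¬ covered M p.y → covered M p.x → covered M p.z →
    ∃ e ∈ M, ∃ f ∈ M, p.x ∈ e ∧ p.z ∈ f ∧ e ≠ f

/-- An admissible edge w.r.t. `M`: either both endpoints are in `V(M)` and lie in two distinct
edges of `M`, or exactly one endpoint is in `V(M)`. -/
def goodEdge (M : Finset (Sym2 V)) (e : Sym2 V) : Prop :=
  (∃ u v : V, e = s(u, v) ∧ covered M u ∧ covered M v ∧ ∀ f ∈ M, ¬(u ∈ f ∧ v ∈ f)) ∨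
  (∃ u v : V, e = s(u, v) ∧ covered M u ∧ ¬ covered M v)


/-! ### Auxiliary lemmas -/

section Aux

variable {w : Sym2 V → ℝ} {M : Finset (Sym2 V)} {Pstar : Finset (P3 V)}

lemma mem_edges' {p : P3 V} {e : Sym2 V} :
    e ∈ p.edges ↔ e = s(p.x, p.y) ∨ e = s(p.y, p.z) := by
  simp [P3.edges]

lemma mem_verts_of_mem_edges {p : P3 V} {e : Sym2 V} {v : V}
    (he : e ∈ p.edges) (hv : v ∈ e) : v ∈ p.verts := by
  rcases mem_edges'.1 he with rfl | rfl <;>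
    rcases Sym2.mem_iff.1 hv with rfl | rfl <;> simp [P3.verts]

lemma edges_not_diag {p : P3 V} {e : Sym2 V} (he : e ∈ p.edges) : ¬ e.IsDiag := by
  rcases mem_edges'.1 he with rfl | rfl <;> simp [p.hxy, p.hyz]

lemma heavy_mem_edges (w : Sym2 V → ℝ) (p : P3 V) : heavy w p ∈ p.edges := by
  unfold heavy; split <;> simp [P3.edges]

lemma covered_of_mem {e : Sym2 V} (he : e ∈ M) {v : V} (hv : v ∈ e) : covered M v :=
  ⟨e, he, hv⟩

lemma path_eq_of_shared (hP : IsPacking Pstar) {p q : P3 V}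
    (hp : p ∈ Pstar) (hq : q ∈ Pstar) {e : Sym2 V} (hep : e ∈ p.edges)
    (heq : e ∈ q.edges) : p = q := by
  by_contra h
  exact Finset.disjoint_left.1 (hP.2.1 p hp q hq h)
    (mem_verts_of_mem_edges hep (Sym2.out_fst_mem e))
    (mem_verts_of_mem_edges heq (Sym2.out_fst_mem e))

lemma kcnt_eq (M : Finset (Sym2 V)) (p : P3 V) :
    kcnt M p = (if covered M p.x then 1 else 0) + (if covered M p.y then 1 else 0)
      + (if covered M p.z then 1 else 0) := by
  have hx : p.x ∉ ({p.y, p.z} : Finset V) := by simp [p.hxy, p.hxz]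
  have hy : p.y ∉ ({p.z} : Finset V) := by simp [p.hyz]
  rw [kcnt, P3.verts, Finset.card_filter, Finset.sum_insert hx, Finset.sum_insert hy,
    Finset.sum_singleton]
  exact (add_assoc _ _ _).symm

lemma cls1_uncov {p : P3 V} (h : cls1 M p) {v : V} (hv : v ∈ p.verts) :
    ¬ covered M v := by
  rw [cls1, kcnt, Finset.card_eq_zero, Finset.filter_eq_empty_iff] at h
  exact h hv

lemma cls2_cases {p : P3 V} (h : cls2 M p) :
    (covered M p.x ∧ ¬ covered M p.y ∧ ¬ covered M p.z) ∨
    (¬ covered M p.x ∧ ¬ covered M p.y ∧ covered M p.z) := by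
  obtain ⟨hk, hy⟩ := h
  rw [kcnt_eq] at hk
  by_cases hx : covered M p.x <;> by_cases hz : covered M p.z <;>
    simp [hx, hy, hz] at hk ⊢

lemma cls6_cases {p : P3 V} (h : cls6 M p) :
    (covered M p.x ∧ covered M p.y ∧ ¬ covered M p.z) ∨
    (¬ covered M p.x ∧ covered M p.y ∧ covered M p.z) := by
  obtain ⟨hk, hy, -, -⟩ := h
  rw [kcnt_eq] at hk
  by_cases hx : covered M p.x <;> by_cases hz : covered M p.z <;>
    simp [hx, hy, hz] at hk ⊢

lemma X1_spec {e : Sym2 V} (he : e ∈ X1 w Pstar M) :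
    ∃ p, p ∈ Pstar ∧ cls1 M p ∧ e ∈ p.edges ∧ e = heavy w p := by
  obtain ⟨p, hp, rfl⟩ := Finset.mem_image.1 he
  obtain ⟨hpP, hc⟩ := Finset.mem_filter.1 hp
  exact ⟨p, hpP, hc, heavy_mem_edges w p, rfl⟩

lemma Y2_spec (hP : IsPacking Pstar) {e : Sym2 V} (he : e ∈ Y2 Pstar M) :
    ∃ p, p ∈ Pstar ∧ cls2 M p ∧ e ∈ p.edges ∧
      e = (if covered M p.x then s(p.y, p.z) else s(p.x, p.y)) ∧
      ∀ v ∈ e, ¬ covered M v := by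
  obtain ⟨hEsub, hX2⟩ := Finset.mem_sdiff.1 he
  obtain ⟨p, hp, hep⟩ := Finset.mem_biUnion.1 hEsub
  obtain ⟨hpP, hc⟩ := Finset.mem_filter.1 hp
  have himg : (if covered M p.x then s(p.x, p.y) else s(p.y, p.z)) ∈ X2 Pstar M :=
    Finset.mem_image_of_mem _ hp
  rcases cls2_cases hc with ⟨hx, hy, hz⟩ | ⟨hx, hy, hz⟩
  · rw [if_pos hx] at himg
    have hne : e ≠ s(p.x, p.y) := fun h => hX2 (h ▸ himg)
    have heq : e = s(p.y, p.z) := (mem_edges'.1 hep).resolve_left hne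
    refine ⟨p, hpP, hc, hep, by rw [if_pos hx]; exact heq, ?_⟩
    intro v hv
    rw [heq] at hv
    rcases Sym2.mem_iff.1 hv with rfl | rfl
    · exact hy
    · exact hz
  · rw [if_neg hx] at himg
    have hne : e ≠ s(p.y, p.z) := fun h => hX2 (h ▸ himg)
    have heq : e = s(p.x, p.y) := (mem_edges'.1 hep).resolve_right hne
    refine ⟨p, hpP, hc, hep, by rw [if_neg hx]; exact heq, ?_⟩
    intro v hv
    rw [heq] at hv
    rcases Sym2.mem_iff.1 hv with rfl | rfl
    · exact hx
    · exact hy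

lemma X6_spec {e : Sym2 V} (he : e ∈ X6 Pstar M) :
    ∃ p, p ∈ Pstar ∧ cls6 M p ∧ e ∈ p.edges ∧
      e = (if covered M p.x then s(p.y, p.z) else s(p.x, p.y)) ∧
      middleIn M (psel Pstar (cls6 M)) e ∧ (∃ v ∈ e, ¬ covered M v) := by
  obtain ⟨p, hp, rfl⟩ := Finset.mem_image.1 he
  obtain ⟨hpP, hc⟩ := Finset.mem_filter.1 hp
  rcases cls6_cases hc with ⟨hx, hy, hz⟩ | ⟨hx, hy, hz⟩
  · refine ⟨p, hpP, hc, ?_, rfl, ⟨⟨p, hp, ?_⟩, ?_⟩, ?_⟩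
    · rw [if_pos hx]; exact mem_edges'.2 (Or.inr rfl)
    · rw [if_pos hx]; exact mem_edges'.2 (Or.inr rfl)
    · rw [if_pos hx]; exact ⟨p.y, p.z, rfl, hy, hz⟩
    · rw [if_pos hx]
      exact ⟨p.z, Sym2.mem_iff.2 (Or.inr rfl), hz⟩
  · refine ⟨p, hpP, hc, ?_, rfl, ⟨⟨p, hp, ?_⟩, ?_⟩, ?_⟩
    · rw [if_neg hx]; exact mem_edges'.2 (Or.inl rfl)
    · rw [if_neg hx]; exact mem_edges'.2 (Or.inl rfl)
    · rw [if_neg hx]; exact ⟨p.y, p.x, Sym2.eq_swap.symm, hy, hx⟩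
    · rw [if_neg hx]
      exact ⟨p.x, Sym2.mem_iff.2 (Or.inl rfl), hx⟩

lemma mem_Mset1 {f e : Sym2 V} (hf : f ∈ M)
    (hmid : middleIn M (psel Pstar (cls6 M)) e) (hsh : shares f e) :
    f ∈ Mset1 Pstar M :=
  Finset.mem_filter.2 ⟨hf, e, hmid, hsh⟩

lemma edgeVerts_card_le (e : Sym2 V) : (univ.filter (· ∈ e)).card ≤ 2 := by
  induction e using Sym2.ind with
  | _ a b =>
    have hsub : (univ.filter (· ∈ s(a, b))) ⊆ {a, b} := by
      intro v hv
      have := (Finset.mem_filter.1 hv).2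
      rcases Sym2.mem_iff.1 this with rfl | rfl <;> simp
    exact le_trans (Finset.card_le_card hsub) (Finset.card_insert_le a {b})

lemma edgeVerts_card (e : Sym2 V) (he : ¬ e.IsDiag) :
    (univ.filter (· ∈ e)).card = 2 := by
  induction e using Sym2.ind with
  | _ a b =>
    have hab : a ≠ b := by simpa using he
    have hset : (univ.filter (· ∈ s(a, b))) = {a, b} := by
      ext v
      simp [Sym2.mem_iff]
    rw [hset, Finset.card_insert_of_notMem (by simp [hab]), Finset.card_singleton]

lemma matching_card_bound {M' : Finset (Sym2 V)} (h : IsMatching M') :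
    2 * M'.card ≤ Fintype.card V := by
  have hdisj : ∀ e ∈ M', ∀ f ∈ M', e ≠ f →
      Disjoint (univ.filter (· ∈ e)) (univ.filter (· ∈ f)) := by
    intro e he f hf hef
    rw [Finset.disjoint_left]
    intro v hv hv'
    exact h.2 e he f hf hef v (Finset.mem_filter.1 hv).2 (Finset.mem_filter.1 hv').2
  have hcb := Finset.card_biUnion hdisj
  have hsum : ∑ e ∈ M', (univ.filter (· ∈ e)).card = 2 * M'.card := by
    rw [Finset.sum_congr rfl fun e he => edgeVerts_card e (h.1 e he), Finset.sum_const,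
      smul_eq_mul, mul_comm]
  calc 2 * M'.card = (M'.biUnion fun e => univ.filter (· ∈ e)).card := by rw [hcb, hsum]
    _ ≤ (univ : Finset V).card := Finset.card_le_card (Finset.subset_univ _)
    _ = Fintype.card V := rfl

lemma covered_card_le (M' : Finset (Sym2 V)) :
    (univ.filter fun v => covered M' v).card ≤ 2 * M'.card := by
  have hsub : (univ.filter fun v => covered M' v) ⊆
      M'.biUnion fun e => univ.filter (· ∈ e) := by
    intro v hv
    obtain ⟨e, he, hve⟩ := (Finset.mem_filter.1 hv).2
    exact Finset.mem_biUnion.2 ⟨e, he, Finset.mem_filter.2 ⟨Finset.mem_univ v, hve⟩⟩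
  calc (univ.filter fun v => covered M' v).card
      ≤ (M'.biUnion fun e => univ.filter (· ∈ e)).card := Finset.card_le_card hsub
    _ ≤ ∑ e ∈ M', (univ.filter (· ∈ e)).card := Finset.card_biUnion_le
    _ ≤ ∑ _e ∈ M', 2 := Finset.sum_le_sum fun e _ => edgeVerts_card_le e
    _ = 2 * M'.card := by rw [Finset.sum_const, smul_eq_mul, mul_comm]

lemma extend_matching (w : Sym2 V → ℝ) (hw : ∀ e, 0 ≤ w e)
    (h2 : 2 ∣ Fintype.card V) :
    ∀ m : ℕ, ∀ M' : Finset (Sym2 V), IsMatching M' →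
      M'.card + m = Fintype.card V / 2 →
      ∃ N', IsMatching N' ∧ N'.card = Fintype.card V / 2 ∧ ew w M' ≤ ew w N' := by
  intro m
  induction m with
  | zero =>
    intro M' hM' hc
    exact ⟨M', hM', by omega, le_refl _⟩
  | succ m ih =>
    intro M' hM' hc
    have hcov := covered_card_le M'
    have htot := Finset.card_filter_add_card_filter_not
      (s := (univ : Finset V)) (p := fun v => covered M' v)
    have hV : (univ : Finset V).card = Fintype.card V := rfl
    obtain ⟨n2, hn2⟩ := h2
    have hge : 1 < (univ.filter fun v => ¬ covered M' v).card := by omega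
    obtain ⟨a, ha, b, hb, hab⟩ := Finset.one_lt_card.1 hge
    have hua : ¬ covered M' a := (Finset.mem_filter.1 ha).2
    have hub : ¬ covered M' b := (Finset.mem_filter.1 hb).2
    have hnotmem : s(a, b) ∉ M' := fun h => hua ⟨_, h, Sym2.mem_mk_left a b⟩
    have hmatch : IsMatching (insert s(a, b) M') := by
      constructor
      · intro e he
        rcases Finset.mem_insert.1 he with rfl | he
        · simpa using hab
        · exact hM'.1 e he
      · intro e he f hf hef v hve hvf
        rcases Finset.mem_insert.1 he with rfl | he' <;>
          rcases Finset.mem_insert.1 hf with rfl | hf'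
        · exact hef rfl
        · rcases Sym2.mem_iff.1 hve with rfl | rfl
          · exact hua ⟨f, hf', hvf⟩
          · exact hub ⟨f, hf', hvf⟩
        · rcases Sym2.mem_iff.1 hvf with rfl | rfl
          · exact hua ⟨e, he', hve⟩
          · exact hub ⟨e, he', hve⟩
        · exact hM'.2 e he' f hf' hef v hve hvf
    obtain ⟨N', h1, h2', h3⟩ := ih (insert s(a, b) M') hmatch
      (by rw [Finset.card_insert_of_notMem hnotmem]; omega)
    refine ⟨N', h1, h2', le_trans ?_ h3⟩
    have hnn := hw s(a, b)
    unfold ew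
    rw [Finset.sum_insert hnotmem]
    linarith

end Aux

theorem statement_9 (n : ℕ) (hn : Fintype.card V = n) (h3 : 3 ∣ n) (h2 : 2 ∣ n)
    (w : Sym2 V → ℝ) (hw : ∀ e : Sym2 V, 0 ≤ w e)
    (M : Finset (Sym2 V)) (hM : IsMaxMatchingOfSize w (n / 3) M)
    (N : Finset (Sym2 V)) (hN : IsMaxMatchingOfSize w (n / 2) N)
    (Pstar : Finset (P3 V)) (hP : IsMaxPacking w Pstar) (hAss : Ass Pstar M) :
    ew w M - ew w (Mset1 Pstar M) + ew w (X1 w Pstar M) + ew w (Y2 Pstar M) +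
      ew w (X6 Pstar M) ≤ ew w N := by
  classical
  have hPack : IsPacking Pstar := hP.1
  -- uncovered facts
  have hB1uncov : ∀ e ∈ X1 w Pstar M, ∀ v ∈ e, ¬ covered M v := by
    intro e he v hv
    obtain ⟨p, hpP, hc, hep, -⟩ := X1_spec he
    exact cls1_uncov hc (mem_verts_of_mem_edges hep hv)
  have hB2uncov : ∀ e ∈ Y2 Pstar M, ∀ v ∈ e, ¬ covered M v := by
    intro e he v hv
    obtain ⟨p, -, -, -, -, h⟩ := Y2_spec hPack he
    exact h v hv
  have hCmid : ∀ e ∈ X6 Pstar M, middleIn M (psel Pstar (cls6 M)) e := by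
    intro e he
    obtain ⟨p, -, -, -, -, h, -⟩ := X6_spec he
    exact h
  -- source description of path edges
  have hsrc : ∀ g : Sym2 V,
      (g ∈ X1 w Pstar M ∨ g ∈ Y2 Pstar M ∨ g ∈ X6 Pstar M) →
      ∃ p, p ∈ Pstar ∧ g ∈ p.edges ∧
        ((cls1 M p ∧ g = heavy w p) ∨
         (cls2 M p ∧ g = (if covered M p.x then s(p.y, p.z) else s(p.x, p.y))) ∨
         (cls6 M p ∧ g = (if covered M p.x then s(p.y, p.z) else s(p.x, p.y)))) := by
    rintro g (hg | hg | hg)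
    · obtain ⟨p, h1, h2, h3, h4⟩ := X1_spec hg
      exact ⟨p, h1, h3, Or.inl ⟨h2, h4⟩⟩
    · obtain ⟨p, h1, h2, h3, h4, -⟩ := Y2_spec hPack hg
      exact ⟨p, h1, h3, Or.inr (Or.inl ⟨h2, h4⟩)⟩
    · obtain ⟨p, h1, h2, h3, h4, -, -⟩ := X6_spec hg
      exact ⟨p, h1, h3, Or.inr (Or.inr ⟨h2, h4⟩)⟩
  -- two distinct path edges never share a vertex
  have hpath : ∀ e f : Sym2 V,
      (e ∈ X1 w Pstar M ∨ e ∈ Y2 Pstar M ∨ e ∈ X6 Pstar M) →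
      (f ∈ X1 w Pstar M ∨ f ∈ Y2 Pstar M ∨ f ∈ X6 Pstar M) →
      e ≠ f → ∀ v, v ∈ e → v ∈ f → False := by
    intro e f hde hdf hef v hve hvf
    obtain ⟨p, hpP, hep, hclse⟩ := hsrc e hde
    obtain ⟨q, hqP, hfq, hclsf⟩ := hsrc f hdf
    have hpq : p = q := by
      by_contra hne
      exact Finset.disjoint_left.1 (hPack.2.1 p hpP q hqP hne)
        (mem_verts_of_mem_edges hep hve) (mem_verts_of_mem_edges hfq hvf)
    subst hpq
    rcases hclse with ⟨h1, he'⟩ | ⟨h1, he'⟩ | ⟨h1, he'⟩ <;>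
      rcases hclsf with ⟨h2, hf'⟩ | ⟨h2, hf'⟩ | ⟨h2, hf'⟩
    · exact hef (he'.trans hf'.symm)
    · have e0 : kcnt M p = 0 := h1
      have e1 : kcnt M p = 1 := h2.1
      omega
    · have e0 : kcnt M p = 0 := h1
      have e2 : kcnt M p = 2 := h2.1
      omega
    · have e0 : kcnt M p = 0 := h2
      have e1 : kcnt M p = 1 := h1.1
      omega
    · exact hef (he'.trans hf'.symm)
    · exact h1.2 h2.2.1
    · have e0 : kcnt M p = 0 := h2
      have e2 : kcnt M p = 2 := h1.1
      omega
    · exact h2.2 h1.2.1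
    · exact hef (he'.trans hf'.symm)
  -- the union is a matching
  have hmU : IsMatching (((M \ Mset1 Pstar M ∪ X1 w Pstar M) ∪ Y2 Pstar M) ∪ X6 Pstar M) := by
    constructor
    · intro e he
      simp only [Finset.mem_union] at he
      rcases he with ((hA | hB1) | hB2) | hC
      · exact hM.1.1 e (Finset.mem_sdiff.1 hA).1
      · obtain ⟨p, -, -, hep, -⟩ := X1_spec hB1
        exact edges_not_diag hep
      · obtain ⟨p, -, -, hep, -, -⟩ := Y2_spec hPack hB2
        exact edges_not_diag hep
      · obtain ⟨p, -, -, hep, -, -, -⟩ := X6_spec hC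
        exact edges_not_diag hep
    · intro e he f hf hef v hve hvf
      simp only [Finset.mem_union] at he hf
      rcases he with ((heA | heB1) | heB2) | heC <;>
        rcases hf with ((hfA | hfB1) | hfB2) | hfC
      -- e ∈ A
      · exact hM.1.2 e (Finset.mem_sdiff.1 heA).1 f (Finset.mem_sdiff.1 hfA).1 hef v hve hvf
      · exact hB1uncov f hfB1 v hvf (covered_of_mem (Finset.mem_sdiff.1 heA).1 hve)
      · exact hB2uncov f hfB2 v hvf (covered_of_mem (Finset.mem_sdiff.1 heA).1 hve)
      · exact (Finset.mem_sdiff.1 heA).2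
          (mem_Mset1 (Finset.mem_sdiff.1 heA).1 (hCmid f hfC) ⟨v, hve, hvf⟩)
      -- e ∈ B1
      · exact hB1uncov e heB1 v hve (covered_of_mem (Finset.mem_sdiff.1 hfA).1 hvf)
      · exact hpath e f (Or.inl heB1) (Or.inl hfB1) hef v hve hvf
      · exact hpath e f (Or.inl heB1) (Or.inr (Or.inl hfB2)) hef v hve hvf
      · exact hpath e f (Or.inl heB1) (Or.inr (Or.inr hfC)) hef v hve hvf
      -- e ∈ B2
      · exact hB2uncov e heB2 v hve (covered_of_mem (Finset.mem_sdiff.1 hfA).1 hvf)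
      · exact hpath e f (Or.inr (Or.inl heB2)) (Or.inl hfB1) hef v hve hvf
      · exact hpath e f (Or.inr (Or.inl heB2)) (Or.inr (Or.inl hfB2)) hef v hve hvf
      · exact hpath e f (Or.inr (Or.inl heB2)) (Or.inr (Or.inr hfC)) hef v hve hvf
      -- e ∈ C
      · exact (Finset.mem_sdiff.1 hfA).2
          (mem_Mset1 (Finset.mem_sdiff.1 hfA).1 (hCmid e heC) ⟨v, hvf, hve⟩)
      · exact hpath e f (Or.inr (Or.inr heC)) (Or.inl hfB1) hef v hve hvf
      · exact hpath e f (Or.inr (Or.inr heC)) (Or.inr (Or.inl hfB2)) hef v hve hvf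
      · exact hpath e f (Or.inr (Or.inr heC)) (Or.inr (Or.inr hfC)) hef v hve hvf
  -- pairwise disjointness of the four edge sets
  have hd1 : Disjoint (M \ Mset1 Pstar M) (X1 w Pstar M) := by
    rw [Finset.disjoint_left]
    intro e he1 he2
    exact hB1uncov e he2 e.out.1 (Sym2.out_fst_mem e)
      (covered_of_mem (Finset.mem_sdiff.1 he1).1 (Sym2.out_fst_mem e))
  have hd2 : Disjoint (M \ Mset1 Pstar M) (Y2 Pstar M) := by
    rw [Finset.disjoint_left]
    intro e he1 he2
    exact hB2uncov e he2 e.out.1 (Sym2.out_fst_mem e)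
      (covered_of_mem (Finset.mem_sdiff.1 he1).1 (Sym2.out_fst_mem e))
  have hd3 : Disjoint (M \ Mset1 Pstar M) (X6 Pstar M) := by
    rw [Finset.disjoint_left]
    intro e he1 he2
    exact (Finset.mem_sdiff.1 he1).2
      (mem_Mset1 (Finset.mem_sdiff.1 he1).1 (hCmid e he2)
        ⟨e.out.1, Sym2.out_fst_mem e, Sym2.out_fst_mem e⟩)
  have hd4 : Disjoint (X1 w Pstar M) (Y2 Pstar M) := by
    rw [Finset.disjoint_left]
    intro e he1 he2
    obtain ⟨p, hpP, hc1, hep, -⟩ := X1_spec he1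
    obtain ⟨q, hqP, hc2, heq, -, -⟩ := Y2_spec hPack he2
    have hpq : p = q := path_eq_of_shared hPack hpP hqP hep heq
    subst hpq
    have e0 : kcnt M p = 0 := hc1
    have e1 : kcnt M p = 1 := hc2.1
    omega
  have hd5 : Disjoint (X1 w Pstar M) (X6 Pstar M) := by
    rw [Finset.disjoint_left]
    intro e he1 he2
    obtain ⟨p, hpP, hc1, hep, -⟩ := X1_spec he1
    obtain ⟨q, hqP, hc6, heq, -, -, -⟩ := X6_spec he2
    have hpq : p = q := path_eq_of_shared hPack hpP hqP hep heq
    subst hpq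
    have e0 : kcnt M p = 0 := hc1
    have e2 : kcnt M p = 2 := hc6.1
    omega
  have hd6 : Disjoint (Y2 Pstar M) (X6 Pstar M) := by
    rw [Finset.disjoint_left]
    intro e he1 he2
    obtain ⟨p, hpP, hc2, hep, -, -⟩ := Y2_spec hPack he1
    obtain ⟨q, hqP, hc6, heq, -, -, -⟩ := X6_spec he2
    have hpq : p = q := path_eq_of_shared hPack hpP hqP hep heq
    subst hpq
    exact hc2.2 hc6.2.1
  -- weight of the union
  have h12 : Disjoint (M \ Mset1 Pstar M ∪ X1 w Pstar M) (Y2 Pstar M) :=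
    Finset.disjoint_union_left.2 ⟨hd2, hd4⟩
  have h123 : Disjoint ((M \ Mset1 Pstar M ∪ X1 w Pstar M) ∪ Y2 Pstar M) (X6 Pstar M) :=
    Finset.disjoint_union_left.2 ⟨Finset.disjoint_union_left.2 ⟨hd3, hd5⟩, hd6⟩
  have hUw : ew w (((M \ Mset1 Pstar M ∪ X1 w Pstar M) ∪ Y2 Pstar M) ∪ X6 Pstar M) =
      ew w (M \ Mset1 Pstar M) + ew w (X1 w Pstar M) + ew w (Y2 Pstar M) +
        ew w (X6 Pstar M) := by
    unfold ew
    rw [Finset.sum_union h123, Finset.sum_union h12, Finset.sum_union hd1]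
  have hAw : ew w (M \ Mset1 Pstar M) = ew w M - ew w (Mset1 Pstar M) :=
    Finset.sum_sdiff_eq_sub (Finset.filter_subset _ _)
  -- extend to a matching of size n/2
  have hcard := matching_card_bound hmU
  have h2' : 2 ∣ Fintype.card V := by rw [hn]; exact h2
  obtain ⟨k, hk⟩ := h2'
  obtain ⟨N', hN'm, hN'c, hN'w⟩ := extend_matching w hw ⟨k, hk⟩
    (Fintype.card V / 2 -
      (((M \ Mset1 Pstar M ∪ X1 w Pstar M) ∪ Y2 Pstar M) ∪ X6 Pstar M).card)
    (((M \ Mset1 Pstar M ∪ X1 w Pstar M) ∪ Y2 Pstar M) ∪ X6 Pstar M) hmU (by omega)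
  have hfinal : ew w N' ≤ ew w N := hN.2.2 N' hN'm (by rw [hN'c, hn])
  have hle : ew w (((M \ Mset1 Pstar M ∪ X1 w Pstar M) ∪ Y2 Pstar M) ∪ X6 Pstar M) ≤
      ew w N' := hN'w
  linarith

end MW3PP
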